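/- Let G be a linear influence game with n players in which all weights are nonnegative: w_{ji} ≥ 0 for all distinct j, i. Define T : {−1,1}^n → {−1,1}^n by T(x)_i = 1 if Σ_{j≠i} w_{ji} x_j − b_i ≥ 0 and −1 otherwise, and T' : {−1,1}^n → {−1,1}^n by T'(x)_i = −1 if Σ_{j≠i} w_{ji} x_j − b_i ≤ 0 and 1 otherwise. Then every pure-strategy Nash equilibrium x of G satisfies T'^n(−𝟙) ≤ x ≤ T^n(𝟙) componentwise, where 𝟙 and −𝟙 denote the all-ones and all-minus-ones joint actions; i.e., every PSNE is contained between the equilibrium reached by best-response dynamics from all −1's and the one reached from all 1's. -/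

import Mathlib

/-!
With nonnegative weights the tie-favoring-`1` best response `T` (`bestResponseUp`) is monotone,
and a PSNE `x` satisfies `x ≤ T x`, since a player playing `1` has nonnegative net influence.
Hence the iterates `T^[k] x` increase from `x` while staying below `T^[k] 𝟙`, so `x ≤ T^[k] 𝟙`.
The bound `T'^[k] (-𝟙) ≤ x` for `T'` (`bestResponseDown`) is the order dual.
-/

open Finset

namespace Monotone

variable {α : Type*} [Preorder α] {f : α → α} {x y : α}

theorem le_iterate_of_le_map_of_le (hf : Monotone f) (hx : x ≤ f x) (hxy : x ≤ y) (k : ℕ) :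
    x ≤ f^[k] y :=
  (hf.monotone_iterate_of_le_map hx (Nat.zero_le k)).trans (hf.iterate k hxy)

theorem iterate_le_of_map_le_of_le (hf : Monotone f) (hx : f x ≤ x) (hyx : y ≤ x) (k : ℕ) :
    f^[k] y ≤ x :=
  (hf.iterate k hyx).trans (hf.antitone_iterate_of_map_le hx (Nat.zero_le k))

end Monotone

namespace LinearInfluenceGame

variable {n : ℕ} (w : Fin n → Fin n → ℝ) (b : Fin n → ℝ)

def netInfluence (x : Fin n → ℝ) (i : Fin n) : ℝ :=
  (∑ j ∈ univ.filter (· ≠ i), w j i * x j) - b i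

noncomputable def bestResponseUp (x : Fin n → ℝ) (i : Fin n) : ℝ :=
  if 0 ≤ netInfluence w b x i then 1 else -1

noncomputable def bestResponseDown (x : Fin n → ℝ) (i : Fin n) : ℝ :=
  if netInfluence w b x i ≤ 0 then -1 else 1

def IsPSNE (x : Fin n → ℝ) : Prop :=
  (∀ i, x i = 1 ∨ x i = -1) ∧ ∀ i, x i * netInfluence w b x i ≥ 0

variable {w}

theorem monotone_netInfluence (hw : ∀ j i, j ≠ i → 0 ≤ w j i) (i : Fin n) :
    Monotone fun x => netInfluence w b x i := fun _ _ hxy =>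
  sub_le_sub_right (sum_le_sum fun j hj =>
    mul_le_mul_of_nonneg_left (hxy j) (hw j i (mem_filter.mp hj).2)) _

theorem monotone_bestResponseUp (hw : ∀ j i, j ≠ i → 0 ≤ w j i) :
    Monotone (bestResponseUp w b) := fun y z hyz i => by
  have : netInfluence w b y i ≤ netInfluence w b z i := monotone_netInfluence b hw i hyz
  unfold bestResponseUp
  split_ifs <;> linarith

theorem monotone_bestResponseDown (hw : ∀ j i, j ≠ i → 0 ≤ w j i) :
    Monotone (bestResponseDown w b) := fun y z hyz i => by
  have : netInfluence w b y i ≤ netInfluence w b z i := monotone_netInfluence b hw i hyz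
  unfold bestResponseDown
  split_ifs <;> linarith

variable {b} {x : Fin n → ℝ}

theorem IsPSNE.le_bestResponseUp (hx : IsPSNE w b x) : x ≤ bestResponseUp w b x := fun i => by
  have := hx.2 i
  unfold bestResponseUp
  rcases hx.1 i with h | h <;> rw [h] at this ⊢ <;> split_ifs <;> linarith

theorem IsPSNE.bestResponseDown_le (hx : IsPSNE w b x) : bestResponseDown w b x ≤ x := fun i => by
  have := hx.2 i
  unfold bestResponseDown
  rcases hx.1 i with h | h <;> rw [h] at this ⊢ <;> split_ifs <;> linarith

end LinearInfluenceGame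

open LinearInfluenceGame

theorem nonneg_lig_psne_between_extremal_dynamics (n : ℕ)
    (w : Fin n → Fin n → ℝ) (b : Fin n → ℝ)
    (hw : ∀ j i : Fin n, j ≠ i → 0 ≤ w j i) :
    let T : (Fin n → ℝ) → (Fin n → ℝ) := fun x i =>
      if 0 ≤ (∑ j ∈ univ.filter (· ≠ i), w j i * x j) - b i then 1 else -1
    let T' : (Fin n → ℝ) → (Fin n → ℝ) := fun x i =>
      if (∑ j ∈ univ.filter (· ≠ i), w j i * x j) - b i ≤ 0 then -1 else 1
    let one : Fin n → ℝ := fun _ => 1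
    let negOne : Fin n → ℝ := fun _ => -1
    ∀ x : Fin n → ℝ, (∀ i, x i = 1 ∨ x i = -1) →
      (∀ i, x i * ((∑ j ∈ univ.filter (· ≠ i), w j i * x j) - b i) ≥ 0) →
      ∀ i : Fin n, T'^[n] negOne i ≤ x i ∧ x i ≤ T^[n] one i := by
  intro T T' one negOne x hx hpsne i
  have hx_le_one : x ≤ one := fun j => by rcases hx j with h | h <;> simp [one, h]
  have hnegOne_le_x : negOne ≤ x := fun j => by rcases hx j with h | h <;> simp [negOne, h]
  have hup : x ≤ T^[n] one :=
    (monotone_bestResponseUp b hw).le_iterate_of_le_map_of_le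
      (IsPSNE.le_bestResponseUp ⟨hx, hpsne⟩) hx_le_one n
  have hdown : T'^[n] negOne ≤ x :=
    (monotone_bestResponseDown b hw).iterate_le_of_map_le_of_le
      (IsPSNE.bestResponseDown_le ⟨hx, hpsne⟩) hnegOne_le_x n
  exact ⟨hdown i, hup i⟩
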